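/- arXiv:2210.05166 — 4 statements merged into one kernel-verified Lean document; each statement's English description precedes it below -/
import Mathlib

section
/- For all integers g ≥ 4 and n with 2 ≤ n and 2n ≤ g + 1, the strict inequality C(2g-2, n) < g! · C(g-1, n) holds, where C(a,b) denotes the binomial coefficient. -/
lemma choose_le_two_pow' (m k : ℕ) : Nat.choose m k ≤ 2 ^ m := by
  rcases le_or_gt k m with h | h
  · calc Nat.choose m k ≤ ∑ i ∈ Finset.range (m + 1), Nat.choose m i :=
          Finset.single_le_sum (fun i _ => Nat.zero_le _)
            (Finset.mem_range.2 (Nat.lt_succ_of_le h))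
      _ = 2 ^ m := Nat.sum_range_choose m
  · simp [Nat.choose_eq_zero_of_lt h]

lemma choose_two_le_of_le_half (m : ℕ) : ∀ k, 2 ≤ k → k ≤ m / 2 →
    Nat.choose m 2 ≤ Nat.choose m k := by
  intro k
  induction k with
  | zero => omega
  | succ k ih =>
    intro h2 hk
    rcases Nat.lt_or_ge k 2 with h | h
    · interval_cases k
      · omega
      · exact le_rfl
    · exact (ih h (by omega)).trans
        (Nat.choose_le_succ_of_lt_half_left (by omega))

lemma choose_two_le (m k : ℕ) (h2 : 2 ≤ k) (h2' : 2 ≤ m - k) (hk : k ≤ m) :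
    Nat.choose m 2 ≤ Nat.choose m k := by
  rcases le_or_gt k (m / 2) with h | h
  · exact choose_two_le_of_le_half m k h2 h
  · rw [← Nat.choose_symm hk]
    exact choose_two_le_of_le_half m (m - k) h2' (by omega)

lemma pow_lt_fact (g : ℕ) (hg : 4 ≤ g) :
    2 * 4 ^ (g - 1) < Nat.factorial g * ((g - 1) * (g - 2)) := by
  induction g with
  | zero => omega
  | succ g ih =>
    rcases Nat.lt_or_ge g 4 with h | h
    · have hg3 : g = 3 := by omega
      subst hg3
      decide
    · have ih' := ih (by omega)
      have hge : g - 1 + 1 = g := by omega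
      have key : 4 * (Nat.factorial g * ((g - 1) * (g - 2))) ≤
          Nat.factorial (g + 1) * ((g + 1 - 1) * (g + 1 - 2)) := by
        rw [Nat.factorial_succ]
        have h1 : g + 1 - 1 = g := by omega
        have h2 : g + 1 - 2 = g - 1 := by omega
        rw [h1, h2]
        have : 4 * (g - 2) ≤ (g + 1) * g := by nlinarith [Nat.sub_le g 2]
        calc 4 * (Nat.factorial g * ((g - 1) * (g - 2)))
            = Nat.factorial g * ((g - 1) * (4 * (g - 2))) := by ring
          _ ≤ Nat.factorial g * ((g - 1) * ((g + 1) * g)) :=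
              Nat.mul_le_mul_left _ (Nat.mul_le_mul_left _ this)
          _ = (g + 1) * Nat.factorial g * (g * (g - 1)) := by ring
      have hpow : 2 * 4 ^ (g + 1 - 1) = 4 * (2 * 4 ^ (g - 1)) := by
        rw [show g + 1 - 1 = g - 1 + 1 by omega, pow_succ]
        ring
      rw [hpow]
      calc 4 * (2 * 4 ^ (g - 1)) < 4 * (Nat.factorial g * ((g - 1) * (g - 2))) := by
            omega
        _ ≤ _ := key

/-- For `g ≥ 4` and `2 ≤ n` with `2n ≤ g + 1` one has `C(2g-2, n) < g! · C(g-1, n)`. -/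
theorem sym_power_not_complete_intersection_numerics (g n : ℕ)
    (hg : 4 ≤ g) (hn : 2 ≤ n) (h : 2 * n ≤ g + 1) :
    Nat.choose (2 * g - 2) n < Nat.factorial g * Nat.choose (g - 1) n := by
  rcases Nat.lt_or_ge (g - 1 - n) 2 with hsmall | hbig
  · -- then g ≤ 5; finitely many cases
    have hg5 : g ≤ 5 := by omega
    have hn3 : n ≤ 3 := by omega
    interval_cases g <;> interval_cases n <;> first | omega | decide
  · have h1 : Nat.choose (2 * g - 2) n ≤ 2 ^ (2 * g - 2) := choose_le_two_pow' _ _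
    have h2 : 2 ^ (2 * g - 2) = 4 ^ (g - 1) := by
      rw [show (4 : ℕ) = 2 ^ 2 by norm_num, ← pow_mul]
      congr 1
      omega
    have h3 : 2 * 4 ^ (g - 1) < Nat.factorial g * ((g - 1) * (g - 2)) :=
      pow_lt_fact g hg
    have h4 : (g - 1) * (g - 2) = 2 * Nat.choose (g - 1) 2 := by
      rw [Nat.choose_two_right, show g - 1 - 1 = g - 2 from by omega,
        Nat.mul_comm (g - 1) (g - 2)]
      obtain ⟨c, hc⟩ := Nat.even_mul_succ_self (g - 2)
      rw [show g - 2 + 1 = g - 1 from by omega] at hc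
      omega
    have h5 : Nat.choose (g - 1) 2 ≤ Nat.choose (g - 1) n :=
      choose_two_le (g - 1) n hn (by omega) (by omega)
    have h6 : 4 ^ (g - 1) < Nat.factorial g * Nat.choose (g - 1) 2 := by
      rw [h4, Nat.mul_left_comm] at h3
      omega
    calc Nat.choose (2 * g - 2) n ≤ 4 ^ (g - 1) := by rw [← h2]; exact h1
      _ < Nat.factorial g * Nat.choose (g - 1) 2 := h6
      _ ≤ Nat.factorial g * Nat.choose (g - 1) n := Nat.mul_le_mul_left _ h5
end

section
/- Let n ≥ 1 and for ε ∈ {+1,-1} let E_ε be the set of vectors a = (a_1,...,a_n) ∈ {+1,-1}^n with a_1⋯a_n = ε. Then in the free abelian group ℤ[ℤ^n] on the group ℤ^n (i.e. finitely supported functions ℤ^n → ℤ), the following identity holds: Σ_{(a,b) ∈ E_+ × E_+} [a+b] − Σ_{a ∈ E_+} [2a] = Σ_{(a,b) ∈ E_- × E_-} [a+b] − Σ_{a ∈ E_-} [2a], where [v] denotes the basis element of ℤ[ℤ^n] corresponding to v ∈ ℤ^n and a+b, 2a are computed componentwise in ℤ^n. -/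
/-!
Both sides equal the sum of `[a + b]` over ordered pairs `a ≠ b` of sign vectors with the given
product, since the diagonal pairs contribute exactly `Σ [2a]`. Negating both `a` and `b` at the
first coordinate where they differ changes the sign of both products and, as `a i + b i = 0`
there, leaves `a + b` unchanged. The set of coordinates where `a` and `b` differ is preserved, so
this map is an involution, and it matches the off-diagonal pairs of `E₊` with those of `E₋`.
-/

open Finset

/-- The sign vectors of length `n` with product of coordinates equal to `ε`. -/
def signVectors (n : ℕ) (ε : ℤ) : Finset (Fin n → ℤ) :=
  (Fintype.piFinset fun _ => ({1, -1} : Finset ℤ)).filter fun a => ∏ i, a i = ε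

theorem Finset.sum_sum_sub_sum_eq_sum_offDiag {α M : Type*} [AddCommGroup M] [DecidableEq α]
    (s : Finset α) (f : α → α → M) :
    (∑ a ∈ s, ∑ b ∈ s, f a b) - ∑ a ∈ s, f a a = ∑ p ∈ s.offDiag, f p.1 p.2 := by
  rw [← sum_product', ← diag_union_offDiag, sum_union (disjoint_diag_offDiag s), sum_diag,
    add_sub_cancel_left]

section NegAt

variable {ι R : Type*} [DecidableEq ι] [AddGroup R]

def negAt (i : ι) (a : ι → R) : ι → R :=
  Function.update a i (-a i)

@[simp]
theorem negAt_negAt (i : ι) (a : ι → R) : negAt i (negAt i a) = a := by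
  simp [negAt]

theorem negAt_apply_ne_negAt_apply_iff (i j : ι) (a b : ι → R) :
    negAt i a j ≠ negAt i b j ↔ a j ≠ b j := by
  rcases eq_or_ne j i with rfl | hj
  · simp [negAt]
  · simp [negAt, Function.update_of_ne hj]

theorem negAt_add_negAt {i : ι} {a b : ι → R} (h : a i + b i = 0) :
    negAt i a + negAt i b = a + b := by
  ext j
  rcases eq_or_ne j i with rfl | hj
  · simp [negAt, h, add_eq_zero_iff_neg_eq'.mp h]
  · simp [negAt, Function.update_of_ne hj]

end NegAt

theorem prod_negAt {ι R : Type*} [Fintype ι] [DecidableEq ι] [CommRing R] (i : ι) (a : ι → R) :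
    ∏ j, negAt i a j = -∏ j, a j := by
  rw [negAt, prod_update_of_mem (mem_univ i), sdiff_singleton_eq_erase,
    ← mul_prod_erase univ a (mem_univ i), neg_mul]

def diffSet {ι R : Type*} [Fintype ι] [DecidableEq R] (p : (ι → R) × (ι → R)) : Finset ι :=
  {i | p.1 i ≠ p.2 i}

theorem diffSet_nonempty_iff {ι R : Type*} [Fintype ι] [DecidableEq R] {p : (ι → R) × (ι → R)} :
    (diffSet p).Nonempty ↔ p.1 ≠ p.2 := by
  simp [diffSet, filter_nonempty_iff, Function.ne_iff]

section FirstDiff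

variable {ι R : Type*} [Fintype ι] [LinearOrder ι] [AddGroup R] [DecidableEq R]

theorem diffSet_map_negAt (i : ι) (p : (ι → R) × (ι → R)) :
    diffSet (p.map (negAt i) (negAt i)) = diffSet p := by
  ext j
  simp [diffSet, negAt_apply_ne_negAt_apply_iff]

def flipFirstDiff (p : (ι → R) × (ι → R)) : (ι → R) × (ι → R) :=
  if h : (diffSet p).Nonempty then
    p.map (negAt ((diffSet p).min' h)) (negAt ((diffSet p).min' h))
  else p

theorem flipFirstDiff_of_nonempty {p : (ι → R) × (ι → R)} (h : (diffSet p).Nonempty) :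
    flipFirstDiff p = p.map (negAt ((diffSet p).min' h)) (negAt ((diffSet p).min' h)) :=
  dif_pos h

theorem flipFirstDiff_of_not_nonempty {p : (ι → R) × (ι → R)} (h : ¬(diffSet p).Nonempty) :
    flipFirstDiff p = p :=
  dif_neg h

theorem diffSet_flipFirstDiff (p : (ι → R) × (ι → R)) : diffSet (flipFirstDiff p) = diffSet p := by
  by_cases h : (diffSet p).Nonempty
  · rw [flipFirstDiff_of_nonempty h, diffSet_map_negAt]
  · rw [flipFirstDiff_of_not_nonempty h]

theorem flipFirstDiff_involutive : Function.Involutive (flipFirstDiff (ι := ι) (R := R)) := by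
  intro p
  by_cases h : (diffSet p).Nonempty
  · have h' : (diffSet (flipFirstDiff p)).Nonempty := (diffSet_flipFirstDiff p).symm ▸ h
    have hmin : (diffSet (flipFirstDiff p)).min' h' = (diffSet p).min' h := by
      congr 1
      exact diffSet_flipFirstDiff p
    rw [flipFirstDiff_of_nonempty h', hmin, flipFirstDiff_of_nonempty h]
    ext <;> simp
  · rw [flipFirstDiff_of_not_nonempty h, flipFirstDiff_of_not_nonempty h]

theorem flipFirstDiff_fst_add_snd {p : (ι → R) × (ι → R)}
    (h : ∀ i, p.1 i ≠ p.2 i → p.1 i + p.2 i = 0) :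
    (flipFirstDiff p).1 + (flipFirstDiff p).2 = p.1 + p.2 := by
  by_cases hne : (diffSet p).Nonempty
  · have hmem := (diffSet p).min'_mem hne
    simp only [diffSet, mem_filter, mem_univ, true_and] at hmem
    rw [flipFirstDiff_of_nonempty hne]
    exact negAt_add_negAt (h _ hmem)
  · rw [flipFirstDiff_of_not_nonempty hne]

end FirstDiff

theorem mem_signVectors {n : ℕ} {ε : ℤ} {a : Fin n → ℤ} :
    a ∈ signVectors n ε ↔ (∀ i, a i = 1 ∨ a i = -1) ∧ ∏ i, a i = ε := by
  simp [signVectors, Fintype.mem_piFinset]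

theorem negAt_mem_signVectors {n : ℕ} {ε : ℤ} {a : Fin n → ℤ} (ha : a ∈ signVectors n ε)
    (i : Fin n) : negAt i a ∈ signVectors n (-ε) := by
  rw [mem_signVectors] at ha ⊢
  refine ⟨fun j => ?_, by rw [prod_negAt, ha.2]⟩
  rcases eq_or_ne j i with rfl | hj
  · simpa [negAt, or_comm, neg_eq_iff_eq_neg] using ha.1 j
  · simpa [negAt, Function.update_of_ne hj] using ha.1 j

theorem add_eq_zero_of_mem_signVectors {n : ℕ} {ε δ : ℤ} {a b : Fin n → ℤ}
    (ha : a ∈ signVectors n ε) (hb : b ∈ signVectors n δ) {i : Fin n} (hab : a i ≠ b i) :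
    a i + b i = 0 := by
  rw [mem_signVectors] at ha hb
  rcases ha.1 i with h | h <;> rcases hb.1 i with h' | h' <;> simp_all

theorem flipFirstDiff_mem_offDiag_signVectors {n : ℕ} {ε : ℤ} {p : (Fin n → ℤ) × (Fin n → ℤ)}
    (hp : p ∈ (signVectors n ε).offDiag) :
    flipFirstDiff p ∈ (signVectors n (-ε)).offDiag := by
  obtain ⟨ha, hb, hne⟩ := mem_offDiag.mp hp
  have hD := diffSet_nonempty_iff.mpr hne
  have hne' : (flipFirstDiff p).1 ≠ (flipFirstDiff p).2 :=
    diffSet_nonempty_iff.mp ((diffSet_flipFirstDiff p).symm ▸ hD)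
  rw [flipFirstDiff_of_nonempty hD] at hne' ⊢
  exact mem_offDiag.mpr ⟨negAt_mem_signVectors ha _, negAt_mem_signVectors hb _, hne'⟩

theorem sum_offDiag_signVectors_neg {n : ℕ} {M : Type*} [AddCommMonoid M] (ε : ℤ)
    (f : (Fin n → ℤ) → M) :
    ∑ p ∈ (signVectors n ε).offDiag, f (p.1 + p.2)
      = ∑ p ∈ (signVectors n (-ε)).offDiag, f (p.1 + p.2) := by
  refine sum_nbij' flipFirstDiff flipFirstDiff (fun p => flipFirstDiff_mem_offDiag_signVectors)
    (fun p hp => neg_neg ε ▸ flipFirstDiff_mem_offDiag_signVectors hp)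
    (fun p _ => flipFirstDiff_involutive p) (fun p _ => flipFirstDiff_involutive p) ?_
  intro p hp
  obtain ⟨ha, hb, -⟩ := mem_offDiag.mp hp
  rw [flipFirstDiff_fst_add_snd fun i => add_eq_zero_of_mem_signVectors ha hb]

theorem half_spin_alt_square_identity_general (n : ℕ) :
    (∑ a ∈ signVectors n 1, ∑ b ∈ signVectors n 1,
        (Finsupp.single (a + b) 1 : (Fin n → ℤ) →₀ ℤ))
      - ∑ a ∈ signVectors n 1, (Finsupp.single (a + a) 1 : (Fin n → ℤ) →₀ ℤ)
    = (∑ a ∈ signVectors n (-1), ∑ b ∈ signVectors n (-1),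
        (Finsupp.single (a + b) 1 : (Fin n → ℤ) →₀ ℤ))
      - ∑ a ∈ signVectors n (-1), (Finsupp.single (a + a) 1 : (Fin n → ℤ) →₀ ℤ) := by
  rw [sum_sum_sub_sum_eq_sum_offDiag, sum_sum_sub_sum_eq_sum_offDiag]
  exact sum_offDiag_signVectors_neg 1 fun v => Finsupp.single v 1

/-- In the free abelian group on `ℤ^n`, the "alternating square" identity relating the
two half-spin index sets:
`Σ_{a,b ∈ E₊} [a+b] − Σ_{a ∈ E₊} [2a] = Σ_{a,b ∈ E₋} [a+b] − Σ_{a ∈ E₋} [2a]`. -/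
theorem half_spin_alt_square_identity (n : ℕ) (hn : 1 ≤ n) :
    (∑ a ∈ signVectors n 1, ∑ b ∈ signVectors n 1,
        (Finsupp.single (a + b) 1 : (Fin n → ℤ) →₀ ℤ))
      - ∑ a ∈ signVectors n 1, (Finsupp.single (a + a) 1 : (Fin n → ℤ) →₀ ℤ)
    = (∑ a ∈ signVectors n (-1), ∑ b ∈ signVectors n (-1),
        (Finsupp.single (a + b) 1 : (Fin n → ℤ) →₀ ℤ))
      - ∑ a ∈ signVectors n (-1), (Finsupp.single (a + a) 1 : (Fin n → ℤ) →₀ ℤ) :=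
  half_spin_alt_square_identity_general n
end

section
/- Let R be a commutative ring whose underlying additive group is torsion-free, let m ≥ 1 be an integer, and let s, δ : ℕ → R be sequences with s(0) = 2^(2m-1) (the image of the integer 2^(2m-1) in R), δ(0) = 0, and such that for every r ≥ 0 one has Σ_{i=0}^{r} (2·s(i) + δ(i)) · δ(r-i) = 2^(2r) · δ(r). Then δ(r) = 0 for all r with 0 ≤ r ≤ m - 1. -/
/-- The abstract recursion argument: in a commutative ring `R` whose additive group is
torsion-free, if `s 0 = 2^(2m-1)`, `δ 0 = 0` and
`Σ_{i=0}^{r} (2 s i + δ i) * δ (r-i) = 2^(2r) * δ r` for all `r`, then `δ r = 0` for all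
`r ≤ m - 1`. -/
theorem half_spin_recursion (R : Type*) [CommRing R]
    (htf : ∀ (n : ℤ) (x : R), n ≠ 0 → n • x = 0 → x = 0)
    (m : ℕ) (hm : 1 ≤ m) (s δ : ℕ → R)
    (hs0 : s 0 = (2 : R) ^ (2 * m - 1)) (hδ0 : δ 0 = 0)
    (hrec : ∀ r : ℕ,
      ∑ i ∈ Finset.range (r + 1), (2 * s i + δ i) * δ (r - i) = 2 ^ (2 * r) * δ r) :
    ∀ r ≤ m - 1, δ r = 0 := by
  intro r
  induction r using Nat.strong_induction_on with
  | _ r IH =>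
    intro hr
    rcases Nat.eq_zero_or_pos r with h0 | hpos
    · simpa [h0] using hδ0
    · have hrm : r < m := by omega
      have hsum : ∑ i ∈ Finset.range (r + 1), (2 * s i + δ i) * δ (r - i)
          = (2 * s 0 + δ 0) * δ r := by
        apply Finset.sum_eq_single_of_mem 0 (Finset.mem_range.mpr (Nat.succ_pos r))
        intro i hi hine
        have : δ (r - i) = 0 := IH (r - i) (by omega) (by omega)
        simp [this]
      have key : (2 : R) ^ (2 * m) * δ r = 2 ^ (2 * r) * δ r := by
        have h2 : (2 : R) ^ (2 * m) = 2 * 2 ^ (2 * m - 1) := by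
          rw [← pow_succ']
          congr 1
          omega
        rw [← hrec r, hsum, hδ0, hs0, add_zero, h2]
      have hz : ((2 : ℤ) ^ (2 * m) - 2 ^ (2 * r)) • δ r = 0 := by
        rw [sub_smul, zsmul_eq_mul, zsmul_eq_mul]
        push_cast
        rw [key]
        ring
      refine htf _ _ ?_ hz
      have : (2 : ℤ) ^ (2 * r) < 2 ^ (2 * m) := by
        apply pow_lt_pow_right₀ <;> omega
      omega
end

section
/- Let m ≥ 2 and let A be an abelian group (written additively). For ε ∈ {+1,-1} let E_ε ⊆ {+1,-1}^{2m} be the set of sign vectors with product of coordinates equal to ε. Suppose p_1, ..., p_{2m} ∈ A. Then the map sending a pair (a, b) ∈ E_+ × E_+ with a ≠ b to the pair (a', b') ∈ E_- × E_- obtained by flipping the signs of both a and b in the first coordinate where they differ is a bijection from {(a,b) ∈ E_+² : a ≠ b} onto {(a',b') ∈ E_-² : a' ≠ b'}, and it satisfies Σ_i (a_i + b_i)·p_i = Σ_i (a'_i + b'_i)·p_i. -/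
open Finset

/-- Flip the signs of both components of a pair of vectors at the first coordinate where
they differ (and do nothing if they are equal). -/
def flipPair {n : ℕ} (x : (Fin n → ℤ) × (Fin n → ℤ)) :
    (Fin n → ℤ) × (Fin n → ℤ) :=
  if h : x.1 = x.2 then x
  else
    let i := (Finset.univ.filter fun i => x.1 i ≠ x.2 i).min' (by
      obtain ⟨i, hi⟩ := Function.ne_iff.mp h
      exact ⟨i, by simpa using hi⟩)
    (Function.update x.1 i (-(x.1 i)), Function.update x.2 i (-(x.2 i)))

/-- The sign vectors of length `n` with product of coordinates `ε`. -/
def signVec (n : ℕ) (ε : ℤ) : Set (Fin n → ℤ) :=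
  {a | (∀ i, a i = 1 ∨ a i = -1) ∧ ∏ i, a i = ε}

/-!
Flipping both vectors at a coordinate `i` changes neither the set of coordinates where they
differ nor, when `i` is one of them, the coordinatewise sum: there the two signs are opposite,
so `a i + b i = 0 = -a i - b i`. Hence `flipPair` is an involution on off-diagonal pairs, and
since a single flip negates the product of the coordinates, it swaps even and odd pairs.
-/

namespace FlipPair

variable {n : ℕ}

def diffSet (x : (Fin n → ℤ) × (Fin n → ℤ)) : Finset (Fin n) :=
  univ.filter fun i => x.1 i ≠ x.2 i

lemma mem_diffSet {x : (Fin n → ℤ) × (Fin n → ℤ)} {i : Fin n} :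
    i ∈ diffSet x ↔ x.1 i ≠ x.2 i := by
  simp [diffSet]

lemma fst_ne_snd_iff_diffSet_nonempty {x : (Fin n → ℤ) × (Fin n → ℤ)} :
    x.1 ≠ x.2 ↔ (diffSet x).Nonempty := by
  simp [diffSet, filter_nonempty_iff, Function.ne_iff]

def firstDiff (x : (Fin n → ℤ) × (Fin n → ℤ)) (h : x.1 ≠ x.2) : Fin n :=
  (diffSet x).min' (fst_ne_snd_iff_diffSet_nonempty.mp h)

lemma firstDiff_mem_diffSet {x : (Fin n → ℤ) × (Fin n → ℤ)} (h : x.1 ≠ x.2) :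
    firstDiff x h ∈ diffSet x :=
  min'_mem _ _

def flipAt (i : Fin n) (x : (Fin n → ℤ) × (Fin n → ℤ)) : (Fin n → ℤ) × (Fin n → ℤ) :=
  (Function.update x.1 i (-x.1 i), Function.update x.2 i (-x.2 i))

lemma flipAt_flipAt (i : Fin n) (x : (Fin n → ℤ) × (Fin n → ℤ)) :
    flipAt i (flipAt i x) = x := by
  ext j <;> rcases eq_or_ne j i with rfl | hj <;> simp [flipAt, *]

lemma diffSet_flipAt (i : Fin n) (x : (Fin n → ℤ) × (Fin n → ℤ)) :
    diffSet (flipAt i x) = diffSet x := by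
  ext j
  simp only [mem_diffSet, flipAt]
  rcases eq_or_ne j i with rfl | hj <;> simp [*]

lemma flipAt_fst_ne_snd_iff {i : Fin n} {x : (Fin n → ℤ) × (Fin n → ℤ)} :
    (flipAt i x).1 ≠ (flipAt i x).2 ↔ x.1 ≠ x.2 := by
  rw [fst_ne_snd_iff_diffSet_nonempty, fst_ne_snd_iff_diffSet_nonempty, diffSet_flipAt]

lemma flipPair_eq_flipAt {x : (Fin n → ℤ) × (Fin n → ℤ)} (h : x.1 ≠ x.2) :
    flipPair x = flipAt (firstDiff x h) x := by
  simp only [flipPair, dif_neg h, flipAt, firstDiff, diffSet]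

lemma flipPair_flipPair {x : (Fin n → ℤ) × (Fin n → ℤ)} (h : x.1 ≠ x.2) :
    flipPair (flipPair x) = x := by
  set i := firstDiff x h
  have hdiff : diffSet (flipAt i x) = diffSet x := diffSet_flipAt i x
  have h' : (flipAt i x).1 ≠ (flipAt i x).2 := flipAt_fst_ne_snd_iff.mpr h
  have hfirst : firstDiff (flipAt i x) h' = i := by
    simp only [firstDiff, hdiff]; rfl
  rw [flipPair_eq_flipAt h, flipPair_eq_flipAt h', hfirst, flipAt_flipAt]

lemma update_neg_mem_signVec {ε : ℤ} {a : Fin n → ℤ} (ha : a ∈ signVec n ε) (i : Fin n) :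
    Function.update a i (-a i) ∈ signVec n (-ε) := by
  refine ⟨fun j => ?_, ?_⟩
  · rcases eq_or_ne j i with rfl | hj
    · rcases ha.1 j with h | h <;> simp [h]
    · simpa [Function.update_of_ne hj] using ha.1 j
  · rw [prod_update_of_mem (mem_univ i), neg_mul,
      ← prod_eq_mul_prod_sdiff_singleton_of_mem (mem_univ i), ha.2]

def offDiagPairs (ε : ℤ) : Set ((Fin n → ℤ) × (Fin n → ℤ)) :=
  {x | x.1 ∈ signVec n ε ∧ x.2 ∈ signVec n ε ∧ x.1 ≠ x.2}

lemma mapsTo_flipPair_offDiagPairs (ε : ℤ) :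
    Set.MapsTo flipPair (offDiagPairs (n := n) ε) (offDiagPairs (-ε)) := by
  rintro x ⟨h1, h2, h⟩
  rw [flipPair_eq_flipAt h]
  exact ⟨update_neg_mem_signVec h1 _, update_neg_mem_signVec h2 _, flipAt_fst_ne_snd_iff.mpr h⟩

lemma add_eq_zero_of_ne_of_sign {a b : ℤ} (ha : a = 1 ∨ a = -1) (hb : b = 1 ∨ b = -1)
    (h : a ≠ b) : a + b = 0 := by
  omega

lemma flipPair_fst_add_snd {x : (Fin n → ℤ) × (Fin n → ℤ)}
    (h1 : ∀ i, x.1 i = 1 ∨ x.1 i = -1) (h2 : ∀ i, x.2 i = 1 ∨ x.2 i = -1) (j : Fin n) :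
    (flipPair x).1 j + (flipPair x).2 j = x.1 j + x.2 j := by
  by_cases h : x.1 = x.2
  · simp [flipPair, h]
  rw [flipPair_eq_flipAt h]
  set i := firstDiff x h
  rcases eq_or_ne j i with rfl | hj
  · have hne : x.1 i ≠ x.2 i := mem_diffSet.mp (firstDiff_mem_diffSet h)
    have hsum := add_eq_zero_of_ne_of_sign (h1 i) (h2 i) hne
    simp only [flipAt, Function.update_self]
    omega
  · simp [flipAt, Function.update_of_ne hj]

end FlipPair

open FlipPair in
theorem flip_pair_bijOn_and_sum_preserving_general (m : ℕ)
    (A : Type*) [AddCommGroup A] (p : Fin (2 * m) → A) :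
    Set.BijOn flipPair
      {x : (Fin (2 * m) → ℤ) × (Fin (2 * m) → ℤ) |
        x.1 ∈ signVec (2 * m) 1 ∧ x.2 ∈ signVec (2 * m) 1 ∧ x.1 ≠ x.2}
      {x : (Fin (2 * m) → ℤ) × (Fin (2 * m) → ℤ) |
        x.1 ∈ signVec (2 * m) (-1) ∧ x.2 ∈ signVec (2 * m) (-1) ∧ x.1 ≠ x.2} ∧
    ∀ x ∈ {x : (Fin (2 * m) → ℤ) × (Fin (2 * m) → ℤ) |
        x.1 ∈ signVec (2 * m) 1 ∧ x.2 ∈ signVec (2 * m) 1 ∧ x.1 ≠ x.2},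
      ∑ i, (x.1 i + x.2 i) • p i
        = ∑ i, ((flipPair x).1 i + (flipPair x).2 i) • p i := by
  have hinv : Set.InvOn flipPair flipPair (offDiagPairs (n := 2 * m) 1) (offDiagPairs (-1)) :=
    ⟨fun x hx => flipPair_flipPair hx.2.2, fun x hx => flipPair_flipPair hx.2.2⟩
  have hback : Set.MapsTo flipPair (offDiagPairs (n := 2 * m) (-1)) (offDiagPairs 1) := by
    simpa using mapsTo_flipPair_offDiagPairs (n := 2 * m) (-1)
  refine ⟨hinv.bijOn (mapsTo_flipPair_offDiagPairs 1) hback, ?_⟩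
  rintro x ⟨h1, h2, -⟩
  simp only [flipPair_fst_add_snd h1.1 h2.1]

/-- The map flipping the signs of both vectors at the first coordinate where they differ
is a sum-preserving bijection from off-diagonal pairs of even sign vectors onto
off-diagonal pairs of odd sign vectors. -/
theorem flip_pair_bijOn_and_sum_preserving (m : ℕ) (hm : 2 ≤ m)
    (A : Type*) [AddCommGroup A] (p : Fin (2 * m) → A) :
    Set.BijOn flipPair
      {x : (Fin (2 * m) → ℤ) × (Fin (2 * m) → ℤ) |
        x.1 ∈ signVec (2 * m) 1 ∧ x.2 ∈ signVec (2 * m) 1 ∧ x.1 ≠ x.2}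
      {x : (Fin (2 * m) → ℤ) × (Fin (2 * m) → ℤ) |
        x.1 ∈ signVec (2 * m) (-1) ∧ x.2 ∈ signVec (2 * m) (-1) ∧ x.1 ≠ x.2} ∧
    ∀ x ∈ {x : (Fin (2 * m) → ℤ) × (Fin (2 * m) → ℤ) |
        x.1 ∈ signVec (2 * m) 1 ∧ x.2 ∈ signVec (2 * m) 1 ∧ x.1 ≠ x.2},
      ∑ i, (x.1 i + x.2 i) • p i
        = ∑ i, ((flipPair x).1 i + (flipPair x).2 i) • p i :=
  flip_pair_bijOn_and_sum_preserving_general m A p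
end
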